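/- arXiv:2401.12849 — 4 statements merged into one kernel-verified Lean document; each statement's English description precedes it below -/
import Mathlib

section
/- (Binary Bellman equation for the state value function.) For every policy π and every state s, the binary safety value function satisfies v^π(s) = i(s) + (1 − i(s)) · max_{s' ∈ F_1^π(s)} v^π(s'); that is, v^π(s) equals the maximum of i(s) and the maximum of v^π over the one-step successors of s under π. -/
open scoped Classical

variable {S A : Type*}

/-- `reach F π t s` : the `t`-step reachable set from state `s` under policy `π`
(a policy assigns to each state the set of allowed actions).
`F_0^π(s) = {s}` and `F_{t+1}^π(s) = { F(s', a) : s' ∈ F_t^π(s), a ∈ π(s') }`. -/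
def reach (F : S → A → S) (π : S → Set A) : ℕ → S → Set S
  | 0, s => {s}
  | t + 1, s => {s'' | ∃ s' ∈ reach F π t s, ∃ a ∈ π s', s'' = F s' a}

/-- `reachSA F π t s a` : the `t`-step reachable set from the state-action pair `(s, a)`:
`F_0^π(s,a) = {s}`, `F_1^π(s,a) = {F(s,a)}`, and for `t ≥ 1`,
`F_{t+1}^π(s,a) = { F(s', a') : s' ∈ F_t^π(s,a), a' ∈ π(s') }`. -/
def reachSA (F : S → A → S) (π : S → Set A) : ℕ → S → A → Set S
  | 0, s, _ => {s}
  | 1, s, a => {F s a}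
  | t + 2, s, a => {s'' | ∃ s' ∈ reachSA F π (t + 1) s a, ∃ a' ∈ π s', s'' = F s' a'}

/-- The insecurity function: `i(s) = 1` if `s ∈ G`, else `0`. -/
noncomputable def insec (G : Set S) (s : S) : ℕ := if s ∈ G then 1 else 0

/-- The binary safety value function of a policy:
`v^π(s) = 1` iff some reachable state from `s` lies in `G`. -/
noncomputable def vPol (F : S → A → S) (G : Set S) (π : S → Set A) (s : S) : ℕ :=
  if ∃ t : ℕ, ∃ s' ∈ reach F π t s, s' ∈ G then 1 else 0

/-- The binary safety action-value function of a policy: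
`b^π(s,a) = 1` iff some reachable state from `(s,a)` lies in `G`. -/
noncomputable def bPol (F : S → A → S) (G : Set S) (π : S → Set A) (s : S) (a : A) : ℕ :=
  if ∃ t : ℕ, ∃ s' ∈ reachSA F π t s a, s' ∈ G then 1 else 0

/-- The optimal binary value function `v^*(s) = inf_π v^π(s)`,
the infimum over all (nonempty-support) policies. -/
noncomputable def vStar (F : S → A → S) (G : Set S) (s : S) : ℕ :=
  ⨅ π : {π : S → Set A // ∀ x, (π x).Nonempty}, vPol F G π.1 s

/-- The optimal binary action-value function `b^*(s,a) = inf_π b^π(s,a)`. -/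
noncomputable def bStar (F : S → A → S) (G : Set S) (s : S) (a : A) : ℕ :=
  ⨅ π : {π : S → Set A // ∀ x, (π x).Nonempty}, bPol F G π.1 s a

/-- The binary Bellman operator:
`(T b)(s,a) = i(s) + (1 − i(s)) · min_{a'} b(F(s,a), a')`. -/
noncomputable def Tb (F : S → A → S) (G : Set S) (b : S → A → ℕ) : S → A → ℕ :=
  fun s a => insec G s + (1 - insec G s) * ⨅ a' : A, b (F s a) a'

/-! A failure state is reachable from `s` iff `s` fails or a failure state is reachable from one
of its one-step successors. As all values lie in `{0, 1}`, the supremum over the successors is `1`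
exactly when some successor has value `1`, also when there is no successor, since `sSup ∅ = 0`
in `ℕ`. -/

lemma Nat.sSup_image_le {α : Type*} {f : α → ℕ} {c : ℕ} (hf : ∀ x, f x ≤ c) (t : Set α) :
    sSup (f '' t) ≤ c :=
  csSup_le' (Set.forall_mem_image.mpr fun x _ => hf x)

lemma Nat.sSup_image_eq_one_iff {α : Type*} {f : α → ℕ} (hf : ∀ x, f x ≤ 1) {t : Set α} :
    sSup (f '' t) = 1 ↔ ∃ x ∈ t, f x = 1 := by
  constructor
  · intro h
    have hne : (f '' t).Nonempty := Set.nonempty_iff_ne_empty.mpr fun he => by simp [he] at h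
    simpa [h] using Nat.sSup_mem hne ⟨1, Set.forall_mem_image.mpr fun x _ => hf x⟩
  · rintro ⟨x, hx, hfx⟩
    exact le_antisymm (Nat.sSup_image_le hf t)
      (hfx ▸ le_csSup ⟨1, Set.forall_mem_image.mpr fun y _ => hf y⟩ (Set.mem_image_of_mem f hx))

section BinaryValue

variable (F : S → A → S) (G : Set S) (π : S → Set A)

lemma mem_reach_succ_iff (t : ℕ) (s x : S) :
    x ∈ reach F π (t + 1) s ↔ ∃ a ∈ π s, x ∈ reach F π t (F s a) := by
  induction t generalizing x with
  | zero => simp [reach, eq_comm]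
  | succ t ih =>
    constructor
    · rintro ⟨y, hy, b, hb, rfl⟩
      obtain ⟨a, ha, hy⟩ := (ih y).mp hy
      exact ⟨a, ha, y, hy, b, hb, rfl⟩
    · rintro ⟨a, ha, y, hy, b, hb, rfl⟩
      exact ⟨y, (ih y).mpr ⟨a, ha, hy⟩, b, hb, rfl⟩

lemma mem_reach_one_iff (s x : S) : x ∈ reach F π 1 s ↔ ∃ a ∈ π s, F s a = x := by
  simp [reach, eq_comm]

lemma vPol_le_one (s : S) : vPol F G π s ≤ 1 := by
  unfold vPol; split <;> simp

lemma vPol_eq_one_iff (s : S) :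
    vPol F G π s = 1 ↔ ∃ t, ∃ x ∈ reach F π t s, x ∈ G := by
  simp [vPol]

lemma vPol_eq_one_iff_mem_or_exists_reach_one (s : S) :
    vPol F G π s = 1 ↔ s ∈ G ∨ ∃ x ∈ reach F π 1 s, vPol F G π x = 1 := by
  rw [vPol_eq_one_iff, ← Nat.or_exists_add_one]
  refine or_congr (by simp [reach]) ⟨?_, ?_⟩
  · rintro ⟨t, x, hx, hxG⟩
    obtain ⟨a, ha, hx⟩ := (mem_reach_succ_iff F π t s x).mp hx
    exact ⟨F s a, (mem_reach_one_iff F π s _).mpr ⟨a, ha, rfl⟩,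
      (vPol_eq_one_iff F G π _).mpr ⟨t, x, hx, hxG⟩⟩
  · rintro ⟨_, hy, hy1⟩
    obtain ⟨a, ha, rfl⟩ := (mem_reach_one_iff F π s _).mp hy
    obtain ⟨t, x, hx, hxG⟩ := (vPol_eq_one_iff F G π _).mp hy1
    exact ⟨t, x, (mem_reach_succ_iff F π t s x).mpr ⟨a, ha, hx⟩, hxG⟩

end BinaryValue

theorem binary_bellman_value_general (F : S → A → S) (G : Set S) (π : S → Set A)
    (s : S) :
    vPol F G π s = insec G s + (1 - insec G s) * sSup (vPol F G π '' reach F π 1 s) := by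
  have hv := vPol_eq_one_iff_mem_or_exists_reach_one F G π s
  by_cases hs : s ∈ G
  · simpa [insec, hs] using hv
  simp only [insec, hs, if_false, zero_add, Nat.sub_zero, one_mul]
  rw [← Nat.sSup_image_eq_one_iff (vPol_le_one F G π), or_iff_right hs] at hv
  have hv_le := vPol_le_one F G π s
  have hsup_le := Nat.sSup_image_le (vPol_le_one F G π) (reach F π 1 s)
  omega

/-- Binary Bellman equation for the state value function:
`v^π(s) = i(s) + (1 − i(s)) · max_{s' ∈ F_1^π(s)} v^π(s')`. -/
theorem binary_bellman_value (F : S → A → S) (G : Set S) (π : S → Set A)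
    (hπ : ∀ x, (π x).Nonempty) (s : S) :
    vPol F G π s = insec G s + (1 - insec G s) * sSup (vPol F G π '' reach F π 1 s) :=
  binary_bellman_value_general F G π s
end

section
/- (Theorem 1(i).) Let b̃ be a fixed point of the binary Bellman operator T that is not identically equal to 1. Then the associated safe set C(b̃) = { s ∈ S : min_{a ∈ A} b̃(s, a) = 0 } is a control invariant safe set: there exists a policy π such that for every s₀ ∈ C(b̃) and every t ≥ 0, F_t^π(s₀) ⊆ C(b̃) and F_t^π(s₀) ∩ G = ∅. -/
open scoped Classical

variable {S A : Type*}

/-! Acting greedily on `b` keeps the run inside the zero set of `min_a b(·, a)`, because a zero of a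
fixed point of `T` at `(s, a)` forces `s ∉ G` and `min_{a'} b(F(s, a), a') = 0`. -/

/-- The safe set `C(b̃)`. -/
def safeSet (b : S → A → ℕ) : Set S := {x | ⨅ a, b x a = 0}

def argminPolicy {β : Type*} [InfSet β] (b : S → A → β) (x : S) : Set A :=
  {a | b x a = ⨅ a', b x a'}

theorem argminPolicy_nonempty {β : Type*} [ConditionallyCompleteLinearOrder β] [WellFoundedLT β]
    [Nonempty A] (b : S → A → β) (x : S) : (argminPolicy b x).Nonempty :=
  ciInf_mem (b x)

theorem reach_subset_of_mapsTo {F : S → A → S} {π : S → Set A} {C : Set S}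
    (hC : ∀ x ∈ C, ∀ a ∈ π x, F x a ∈ C) {s : S} (hs : s ∈ C) : ∀ t, reach F π t s ⊆ C
  | 0 => by simpa [reach] using hs
  | t + 1 => by
    rintro _ ⟨x, hx, a, ha, rfl⟩
    exact hC x (reach_subset_of_mapsTo hC hs t hx) a ha

theorem Tb_eq_zero_iff {F : S → A → S} {G : Set S} {b : S → A → ℕ} {s : S} {a : A} :
    Tb F G b s a = 0 ↔ s ∉ G ∧ ⨅ a', b (F s a) a' = 0 := by
  by_cases hs : s ∈ G <;> simp [Tb, insec, hs]

section FixedPoint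

variable {F : S → A → S} {G : Set S} {b : S → A → ℕ}

theorem notMem_and_map_mem_safeSet_of_eq_zero (hfix : Tb F G b = b) {s : S} {a : A}
    (h : b s a = 0) : s ∉ G ∧ F s a ∈ safeSet b :=
  Tb_eq_zero_iff.mp ((congrFun (congrFun hfix s) a).trans h)

theorem safeSet_disjoint [Nonempty A] (hfix : Tb F G b = b) : Disjoint (safeSet b) G := by
  refine Set.disjoint_left.mpr fun x hx => ?_
  obtain ⟨a, ha⟩ := ciInf_mem (b x)
  exact (notMem_and_map_mem_safeSet_of_eq_zero hfix (ha.trans hx)).1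

theorem map_mem_safeSet (hfix : Tb F G b = b) {x : S} (hx : x ∈ safeSet b) {a : A}
    (ha : a ∈ argminPolicy b x) : F x a ∈ safeSet b :=
  (notMem_and_map_mem_safeSet_of_eq_zero hfix (ha.trans hx)).2

end FixedPoint

theorem safe_set_is_CIS_general [Nonempty A] (F : S → A → S) (G : Set S)
    (b : S → A → ℕ) (hfix : Tb F G b = b) :
    ∃ π : S → Set A, (∀ x, (π x).Nonempty) ∧
      ∀ s₀ ∈ {x : S | (⨅ a : A, b x a) = 0}, ∀ t : ℕ,
        reach F π t s₀ ⊆ {x : S | (⨅ a : A, b x a) = 0} ∧ reach F π t s₀ ∩ G = ∅ := by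
  refine ⟨argminPolicy b, argminPolicy_nonempty b, fun s₀ hs₀ t => ?_⟩
  have hreach : reach F (argminPolicy b) t s₀ ⊆ safeSet b :=
    reach_subset_of_mapsTo (fun _ hx _ ha => map_mem_safeSet hfix hx ha) hs₀ t
  exact ⟨hreach, Set.disjoint_iff_inter_eq_empty.mp ((safeSet_disjoint hfix).mono_left hreach)⟩

/-- Theorem 1(i): if `b̃` is a fixed point of `T` not identically `1`,
then `C(b̃)` is control invariant safe: there exists a policy `π` such that for all
`s₀ ∈ C(b̃)` and `t ≥ 0`, `F_t^π(s₀) ⊆ C(b̃)` and `F_t^π(s₀) ∩ G = ∅`. -/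
theorem safe_set_is_CIS [Fintype A] [Nonempty A] (F : S → A → S) (G : Set S)
    (b : S → A → ℕ) (hb : ∀ s a, b s a = 0 ∨ b s a = 1) (hfix : Tb F G b = b)
    (hnt : b ≠ fun _ _ => 1) :
    ∃ π : S → Set A, (∀ x, (π x).Nonempty) ∧
      ∀ s₀ ∈ {x : S | (⨅ a : A, b x a) = 0}, ∀ t : ℕ,
        reach F π t s₀ ⊆ {x : S | (⨅ a : A, b x a) = 0} ∧ reach F π t s₀ ∩ G = ∅ :=
  safe_set_is_CIS_general F G b hfix
end

section
/- (Theorem 1(ii): the safe set is unreachable from outside.) Let b̃ be a fixed point of the binary Bellman operator T with associated safe set C = C(b̃). For every G-avoiding path s₀, s₁, …, s_T (i.e., s_{k+1} = F(s_k, a_k) for some actions a_k for all k < T, and s_k ∉ G for all k < T), if s₀ ∉ C then s_T ∉ C. In particular, for any policy, no trajectory that starts outside C and has not entered the failure set G can reach C. -/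
/-! Off `G` the fixed-point equation reads `b̃(s, a) = min_{a'} b̃(F(s, a), a')`, so a state
outside `G` with a successor in the safe set is itself safe. The safe set is thus closed
under stepping backwards along `G`-avoiding transitions, and induction along the path
carries `s_T ∈ C` back to `s₀ ∈ C`. -/

open scoped Classical

variable {S A : Type*}

theorem Tb_apply_of_notMem {F : S → A → S} {G : Set S} {s : S} (hs : s ∉ G)
    (b : S → A → ℕ) (a : A) : Tb F G b s a = ⨅ a', b (F s a) a' := by
  simp [Tb, insec, hs]

theorem mem_safeSet_of_step_mem {F : S → A → S} {G : Set S} {b : S → A → ℕ}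
    (hfix : Tb F G b = b) {s : S} (hs : s ∉ G) {a : A} (h : F s a ∈ safeSet b) :
    s ∈ safeSet b := by
  have hsa : b s a = 0 := by
    rw [← hfix, Tb_apply_of_notMem hs]
    exact h
  exact Nat.eq_zero_of_le_zero (hsa ▸ ciInf_le (OrderBot.bddBelow _) a)

theorem safe_set_unreachable_from_outside_general
    (F : S → A → S) (G : Set S)
    (b : S → A → ℕ) (hfix : Tb F G b = b)
    (T : ℕ) (s : ℕ → S) (act : ℕ → A)
    (hpath : ∀ k < T, s (k + 1) = F (s k) (act k))
    (havoid : ∀ k < T, s k ∉ G)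
    (h0 : s 0 ∉ {x : S | (⨅ a : A, b x a) = 0}) :
    s T ∉ {x : S | (⨅ a : A, b x a) = 0} := by
  induction T with
  | zero => exact h0
  | succ n ih =>
    intro hsucc
    refine ih (fun k hk => hpath k (by omega)) (fun k hk => havoid k (by omega)) ?_
    rw [hpath n n.lt_succ_self] at hsucc
    exact mem_safeSet_of_step_mem hfix (havoid n n.lt_succ_self) hsucc

/-- Theorem 1(ii): the safe set of a fixed point of `T` is
unreachable from outside along `G`-avoiding paths: if `s_{k+1} = F(s_k, a_k)`
and `s_k ∉ G` for all `k < T`, and `s₀ ∉ C(b̃)`, then `s_T ∉ C(b̃)`. -/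
theorem safe_set_unreachable_from_outside [Fintype A] [Nonempty A]
    (F : S → A → S) (G : Set S)
    (b : S → A → ℕ) (hb : ∀ s a, b s a = 0 ∨ b s a = 1) (hfix : Tb F G b = b)
    (T : ℕ) (s : ℕ → S) (act : ℕ → A)
    (hpath : ∀ k < T, s (k + 1) = F (s k) (act k))
    (havoid : ∀ k < T, s k ∉ G)
    (h0 : s 0 ∉ {x : S | (⨅ a : A, b x a) = 0}) :
    s T ∉ {x : S | (⨅ a : A, b x a) = 0} :=
  safe_set_unreachable_from_outside_general F G b hfix T s act hpath havoid h0
end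

section
/- (Characterization of persistently safe states.) For every state s, the optimal binary value satisfies v^*(s) = 0 if and only if there exists a policy π such that F_t^π(s) ∩ G = ∅ for all t ≥ 0; that is, s belongs to the set of persistently safe states S_safe = { s : min_{a ∈ A} b^*(s, a) = 0 } exactly when some policy avoids the failure set G for all future times starting from s. -/
open scoped Classical

variable {S A : Type*}

/-!
A policy that is safe from `s` and allows `a` at `s` is also safe from `F s a`, so `b^π(s, a) = 0`.
Conversely, if `b^π(s, a) = 0`, the policy that plays only `a` at `s` and follows `π` elsewhere
is safe from `s`: every run leaves `s` towards `F s a`, from where `π` is safe, and a return to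
`s` is harmless because `s ∉ G`.
-/

lemma Nat.iInf_eq_zero_iff {ι : Sort*} [Nonempty ι] {f : ι → ℕ} :
    ⨅ i, f i = 0 ↔ ∃ i, f i = 0 :=
  ⟨fun h => (ciInf_mem f).imp fun _ hi => hi.trans h,
    fun ⟨i, hi⟩ => Nat.eq_zero_of_le_zero (hi ▸ ciInf_le (OrderBot.bddBelow _) i)⟩

section Reach

variable (F : S → A → S) (π : S → Set A)

lemma reachSA_succ (s : S) (a : A) (t : ℕ) :
    reachSA F π (t + 1) s a = reach F π t (F s a) := by
  induction t with
  | zero => rfl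
  | succ t ih => simp only [reachSA, reach, ih]

variable {F π}

lemma reach_apply_subset_reach_succ {s : S} {a : A} (ha : a ∈ π s) (t : ℕ) :
    reach F π t (F s a) ⊆ reach F π (t + 1) s := by
  induction t with
  | zero => rintro x rfl; exact ⟨s, rfl, a, ha, rfl⟩
  | succ t ih => rintro x ⟨y, hy, b, hb, rfl⟩; exact ⟨y, ih hy, b, hb, rfl⟩

lemma reach_update_subset (s : S) (a : A) (t : ℕ) :
    reach F (Function.update π s {a}) t s ⊆ insert s (⋃ n, reach F π n (F s a)) := by
  induction t with
  | zero => simp [reach]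
  | succ t ih =>
    rintro x ⟨y, hy, b, hb, rfl⟩
    refine Or.inr (Set.mem_iUnion.2 ?_)
    rcases eq_or_ne y s with rfl | hys
    · rw [Function.update_self, Set.mem_singleton_iff] at hb
      exact ⟨0, hb ▸ rfl⟩
    · rw [Function.update_of_ne hys] at hb
      obtain ⟨n, hn⟩ := Set.mem_iUnion.1 ((ih hy).resolve_left hys)
      exact ⟨n + 1, y, hn, b, hb, rfl⟩

end Reach

section Value

variable {F : S → A → S} {G : Set S} {π : S → Set A} {s : S}

lemma vPol_eq_zero_iff : vPol F G π s = 0 ↔ ∀ t, reach F π t s ∩ G = ∅ := by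
  simp only [vPol, ite_eq_right_iff, one_ne_zero, imp_false, not_exists, not_and,
    Set.eq_empty_iff_forall_notMem, Set.mem_inter_iff]

lemma bPol_eq_zero_iff {a : A} :
    bPol F G π s a = 0 ↔ s ∉ G ∧ ∀ t, reach F π t (F s a) ∩ G = ∅ := by
  simp only [bPol, ite_eq_right_iff, one_ne_zero, imp_false, not_exists, not_and,
    Set.eq_empty_iff_forall_notMem, Set.mem_inter_iff]
  constructor
  · intro h
    exact ⟨h 0 s rfl, fun t x hx => h (t + 1) x (reachSA_succ F π s a t ▸ hx)⟩
  · rintro ⟨hs, h⟩ (_ | t) x hx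
    · exact hx ▸ hs
    · exact h t x (reachSA_succ F π s a t ▸ hx)

lemma vStar_eq_zero_iff [Nonempty A] :
    vStar F G s = 0 ↔ ∃ π : S → Set A, (∀ x, (π x).Nonempty) ∧ ∀ t, reach F π t s ∩ G = ∅ := by
  have : Nonempty {π : S → Set A // ∀ x, (π x).Nonempty} :=
    ⟨⟨fun _ => Set.univ, fun _ => Set.univ_nonempty⟩⟩
  simp only [vStar, Nat.iInf_eq_zero_iff, vPol_eq_zero_iff, Subtype.exists, exists_prop]

lemma bStar_eq_zero_iff {a : A} :
    bStar F G s a = 0 ↔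
      ∃ π : S → Set A, (∀ x, (π x).Nonempty) ∧ bPol F G π s a = 0 := by
  have : Nonempty {π : S → Set A // ∀ x, (π x).Nonempty} :=
    ⟨⟨fun _ => {a}, fun _ => Set.singleton_nonempty a⟩⟩
  simp only [bStar, Nat.iInf_eq_zero_iff, Subtype.exists, exists_prop]

lemma exists_bStar_eq_zero_iff_vStar_eq_zero [Nonempty A] :
    (∃ a, bStar F G s a = 0) ↔ vStar F G s = 0 := by
  simp only [bStar_eq_zero_iff, bPol_eq_zero_iff, vStar_eq_zero_iff]
  constructor
  · rintro ⟨a, π, hπ, hs, hsafe⟩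
    refine ⟨Function.update π s {a}, fun x => ?_, fun t => ?_⟩
    · rcases eq_or_ne x s with rfl | hxs
      · simp
      · simpa [Function.update_of_ne hxs] using hπ x
    · refine Set.eq_empty_of_forall_notMem fun x ⟨hx, hxG⟩ => ?_
      rcases reach_update_subset s a t hx with rfl | hx
      · exact hs hxG
      · obtain ⟨n, hn⟩ := Set.mem_iUnion.1 hx
        exact (hsafe n).subset ⟨hn, hxG⟩
  · rintro ⟨π, hπ, hsafe⟩
    obtain ⟨a, ha⟩ := hπ s
    refine ⟨a, π, hπ, fun hsG => (hsafe 0).subset ⟨rfl, hsG⟩, fun t => ?_⟩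
    exact Set.subset_eq_empty
      (Set.inter_subset_inter_left G (reach_apply_subset_reach_succ ha t)) (hsafe (t + 1))

end Value

theorem persistently_safe_iff_general [Nonempty A] (F : S → A → S) (G : Set S) (s : S) :
    (vStar F G s = 0 ↔
      ∃ π : S → Set A, (∀ x, (π x).Nonempty) ∧ ∀ t : ℕ, reach F π t s ∩ G = ∅) ∧
    ((⨅ a : A, bStar F G s a) = 0 ↔
      ∃ π : S → Set A, (∀ x, (π x).Nonempty) ∧ ∀ t : ℕ, reach F π t s ∩ G = ∅) := by
  refine ⟨vStar_eq_zero_iff, ?_⟩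
  rw [Nat.iInf_eq_zero_iff, exists_bStar_eq_zero_iff_vStar_eq_zero, vStar_eq_zero_iff]

/-- characterization of persistently safe states:
`v^*(s) = 0` iff some policy avoids `G` for all future times from `s`; that is,
`s ∈ S_safe = { s : min_a b^*(s,a) = 0 }` exactly when such a policy exists. -/
theorem persistently_safe_iff [Fintype A] [Nonempty A] (F : S → A → S) (G : Set S) (s : S) :
    (vStar F G s = 0 ↔
      ∃ π : S → Set A, (∀ x, (π x).Nonempty) ∧ ∀ t : ℕ, reach F π t s ∩ G = ∅) ∧
    ((⨅ a : A, bStar F G s a) = 0 ↔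
      ∃ π : S → Set A, (∀ x, (π x).Nonempty) ∧ ∀ t : ℕ, reach F π t s ∩ G = ∅) :=
  persistently_safe_iff_general F G s
end
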